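/- Let A: [t₀,t_f] → ℝ^{n×n} be of class C² with ‖A(t)‖ ≤ M_A > 0, ‖Ȧ(t)‖ ≤ M_{Ȧ}, and ‖Ä(t)‖ ≤ M_{Ä} for all t, and let φ be the transition matrix of ẋ = A(t)x. Define φ̃(t,s) = I + (t−s)A(s) + ((t−s)²/2)(Ȧ(s) + A(s)²). Then for all t₀ ≤ s ≤ t ≤ t_f, ‖φ(t,s) − φ̃(t,s)‖ ≤ (1 + 3M_{Ȧ}/M_A² + M_{Ä}/M_A³)(e^{(t−s)M_A} − (t−s)²M_A²/2 − (t−s)M_A − 1). -/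

import Mathlib

/-! Writing `Φ(t) = φ(t, s)`, the derivatives of `Φ` are `Φ' = A Φ`, `Φ'' = (A' + A²) Φ` and
`Φ''' = (A'' + 2 A' A + A A' + A³) Φ`. Grönwall gives `‖Φ(t)‖ ≤ e^{M (t - s)}` with `M = M_A`, hence
`‖Φ'''(t)‖ ≤ K e^{M (t - s)}` with `K = M_Ä + 3 M_Ȧ M + M³`. The second order Taylor polynomial
of `Φ` at `s` is `φ̃(·, s)`, and integrating the bound on `Φ'''` three times from `s`, each time by
the comparison principle for `‖f‖` against a scalar function with the same initial value, bounds
the remainder by `K / M³ · (e^{M (t - s)} - 1 - M (t - s) - M² (t - s)² / 2)`. -/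

open Set Real

noncomputable def expTail (n : ℕ) (x : ℝ) : ℝ :=
  exp x - ∑ k ∈ Finset.range n, x ^ k / k.factorial

lemma expTail_succ (n : ℕ) (x : ℝ) : expTail (n + 1) x = expTail n x - x ^ n / n.factorial := by
  rw [expTail, expTail, Finset.sum_range_succ]
  ring

lemma expTail_succ_zero (n : ℕ) : expTail (n + 1) 0 = 0 := by
  simp [expTail, Finset.sum_range_succ']

lemma expTail_three (x : ℝ) : expTail 3 x = exp x - x ^ 2 / 2 - x - 1 := by
  simp only [expTail, Finset.sum_range_succ, Finset.sum_range_zero, Nat.factorial]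
  push_cast
  ring

lemma hasDerivAt_expTail_succ (n : ℕ) (x : ℝ) :
    HasDerivAt (expTail (n + 1)) (expTail n x) x := by
  induction n with
  | zero =>
    have hfun : expTail 1 = fun y => exp y - 1 := funext fun y => by simp [expTail]
    simpa [hfun, expTail] using (hasDerivAt_exp x).sub_const 1
  | succ n ih =>
    have hpow : HasDerivAt (fun y : ℝ => y ^ (n + 1) / (n + 1).factorial)
        (x ^ n / n.factorial) x := by
      refine ((hasDerivAt_pow (n + 1) x).div_const _).congr_deriv ?_
      rw [Nat.factorial_succ]
      push_cast
      field_simp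
    have hfun : expTail (n + 1 + 1) =
        fun y => expTail (n + 1) y - y ^ (n + 1) / (n + 1).factorial :=
      funext (expTail_succ (n + 1))
    rw [hfun, expTail_succ]
    exact ih.sub hpow

lemma hasDerivAt_const_mul_expTail_succ (c M a : ℝ) (hM : M ≠ 0) (n : ℕ) (x : ℝ) :
    HasDerivAt (fun y => c / M ^ (n + 1) * expTail (n + 1) (M * (y - a)))
      (c / M ^ n * expTail n (M * (x - a))) x := by
  have hlin : HasDerivAt (fun y => M * (y - a)) M x := by
    simpa using ((hasDerivAt_id x).sub_const a).const_mul M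
  refine (((hasDerivAt_expTail_succ n _).comp x hlin).const_mul _).congr_deriv ?_
  field_simp
  ring

section Comparison

variable {F : Type*} [NormedAddCommGroup F] [NormedSpace ℝ F] {a b : ℝ}

lemma HasDerivWithinAt.Ici_of_Icc {f : ℝ → F} {f' : F} {x : ℝ} (hx : x ∈ Ico a b)
    (h : HasDerivWithinAt f f' (Icc a b) x) : HasDerivWithinAt f f' (Ici x) x :=
  h.mono_of_mem_nhdsWithin
    (Filter.mem_of_superset (Icc_mem_nhdsGE hx.2) (Icc_subset_Icc_left hx.1))

theorem norm_le_expTail_succ_of_norm_deriv_le {f f' : ℝ → F} {c M : ℝ} (hM : M ≠ 0) (n : ℕ)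
    (hf : ∀ x ∈ Icc a b, HasDerivWithinAt f (f' x) (Icc a b) x) (ha : f a = 0)
    (bound : ∀ x ∈ Icc a b, ‖f' x‖ ≤ c / M ^ n * expTail n (M * (x - a))) :
    ∀ x ∈ Icc a b, ‖f x‖ ≤ c / M ^ (n + 1) * expTail (n + 1) (M * (x - a)) :=
  fun _ hx => image_norm_le_of_norm_deriv_right_le_deriv_boundary
    (fun x hx => (hf x hx).continuousWithinAt)
    (fun x hx => (hf x (Ico_subset_Icc_self hx)).Ici_of_Icc hx)
    (by simp [ha, expTail_succ_zero])
    (hasDerivAt_const_mul_expTail_succ c M a hM n)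
    (fun x hx => bound x (Ico_subset_Icc_self hx)) hx

theorem norm_le_mul_exp_of_hasDerivWithinAt_comp {A Φ : ℝ → F →L[ℝ] F} {M : ℝ}
    (hΦ : ∀ x ∈ Icc a b, HasDerivWithinAt Φ ((A x).comp (Φ x)) (Icc a b) x)
    (hA : ∀ x ∈ Icc a b, ‖A x‖ ≤ M) :
    ∀ x ∈ Icc a b, ‖Φ x‖ ≤ ‖Φ a‖ * exp (M * (x - a)) := by
  intro x hx
  have h := norm_le_gronwallBound_of_norm_deriv_right_le (ε := 0)
    (fun x hx => (hΦ x hx).continuousWithinAt)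
    (fun x hx => (hΦ x (Ico_subset_Icc_self hx)).Ici_of_Icc hx) le_rfl
    (fun y hy => by
      rw [add_zero]
      exact (ContinuousLinearMap.opNorm_comp_le _ _).trans
        (mul_le_mul_of_nonneg_right (hA y (Ico_subset_Icc_self hy)) (norm_nonneg _)))
    x hx
  rwa [gronwallBound_ε0] at h

end Comparison

section LinearODE

variable {E : Type*} [NormedAddCommGroup E] [NormedSpace ℝ E]

lemma norm_comp_le_of_le {B₁ B₂ : E →L[ℝ] E} {m₁ m₂ : ℝ} (h₁ : ‖B₁‖ ≤ m₁) (h₂ : ‖B₂‖ ≤ m₂) :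
    ‖B₁.comp B₂‖ ≤ m₁ * m₂ :=
  (B₁.opNorm_comp_le B₂).trans (mul_le_mul h₁ h₂ (norm_nonneg _) ((norm_nonneg _).trans h₁))

lemma norm_thirdDeriv_linearODE_le {A A' A'' Φ : E →L[ℝ] E} {M M' M'' r : ℝ}
    (hA : ‖A‖ ≤ M) (hA' : ‖A'‖ ≤ M') (hA'' : ‖A''‖ ≤ M'') (hΦ : ‖Φ‖ ≤ r) :
    ‖(A''.comp Φ + A'.comp (A.comp Φ))
        + (A'.comp (A.comp Φ) + A.comp (A'.comp Φ + A.comp (A.comp Φ)))‖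
      ≤ (M'' + 3 * M' * M + M ^ 3) * r := by
  have hAΦ := norm_comp_le_of_le hA hΦ
  have hA'AΦ := norm_comp_le_of_le hA' hAΦ
  have hΦ' : ‖A'.comp Φ + A.comp (A.comp Φ)‖ ≤ M' * r + M * (M * r) :=
    (norm_add_le _ _).trans (add_le_add (norm_comp_le_of_le hA' hΦ) (norm_comp_le_of_le hA hAΦ))
  calc _ ≤ (M'' * r + M' * (M * r)) + (M' * (M * r) + M * (M' * r + M * (M * r))) :=
        (norm_add_le _ _).trans <| add_le_add
          ((norm_add_le _ _).trans (add_le_add (norm_comp_le_of_le hA'' hΦ) hA'AΦ))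
          ((norm_add_le _ _).trans (add_le_add hA'AΦ (norm_comp_le_of_le hA hΦ')))
    _ = (M'' + 3 * M' * M + M ^ 3) * r := by ring

theorem norm_sub_taylor2_le_of_linearODE {a b M M' M'' : ℝ} {A A' A'' Φ : ℝ → E →L[ℝ] E}
    (hA' : ∀ t ∈ Icc a b, HasDerivWithinAt A (A' t) (Icc a b) t)
    (hA'' : ∀ t ∈ Icc a b, HasDerivWithinAt A' (A'' t) (Icc a b) t)
    (hM : 0 < M) (hA_le : ∀ t ∈ Icc a b, ‖A t‖ ≤ M) (hA'_le : ∀ t ∈ Icc a b, ‖A' t‖ ≤ M')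
    (hA''_le : ∀ t ∈ Icc a b, ‖A'' t‖ ≤ M'')
    (hΦ : ∀ t ∈ Icc a b, HasDerivWithinAt Φ ((A t).comp (Φ t)) (Icc a b) t)
    (hΦa : Φ a = ContinuousLinearMap.id ℝ E) :
    ∀ t ∈ Icc a b, ‖Φ t - (ContinuousLinearMap.id ℝ E + (t - a) • A a
        + ((t - a) ^ 2 / 2) • (A' a + (A a).comp (A a)))‖
      ≤ (M'' + 3 * M' * M + M ^ 3) / M ^ 3 * expTail 3 (M * (t - a)) := by
  set C := A' a + (A a).comp (A a)
  have hΦ_le (t) (ht : t ∈ Icc a b) : ‖Φ t‖ ≤ exp (M * (t - a)) := by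
    refine (norm_le_mul_exp_of_hasDerivWithinAt_comp hΦ hA_le t ht).trans ?_
    rw [hΦa]
    exact mul_le_of_le_one_left (exp_pos _).le ContinuousLinearMap.norm_id_le
  have hAΦ (t) (ht : t ∈ Icc a b) := (hA' t ht).clm_comp (hΦ t ht)
  have hΦ'' (t) (ht : t ∈ Icc a b) := ((hA'' t ht).clm_comp (hΦ t ht)).add
    ((hA' t ht).clm_comp (hAΦ t ht))
  have hlin (t : ℝ) : HasDerivAt (fun τ : ℝ => A a + (τ - a) • C) C t := by
    simpa using ((hasDerivAt_id t).sub_const a).smul_const C |>.const_add (A a)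
  have hquad (t : ℝ) : HasDerivAt (fun τ : ℝ => ContinuousLinearMap.id ℝ E + (τ - a) • A a
      + ((τ - a) ^ 2 / 2) • C) (A a + (t - a) • C) t := by
    have hsq : HasDerivAt (fun τ : ℝ => (τ - a) ^ 2 / 2) (t - a) t := by
      simpa using (((hasDerivAt_id t).sub_const a).pow 2).div_const 2
    simpa using ((((hasDerivAt_id t).sub_const a).smul_const (A a)).const_add _).fun_add
      (hsq.smul_const C)
  have hM0 := hM.ne'
  have h₂ := norm_le_expTail_succ_of_norm_deriv_le hM0 0
    (fun t ht => (hΦ'' t ht).sub_const C) (by simp [hΦa, C])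
    (fun t ht => by
      simpa [expTail] using norm_thirdDeriv_linearODE_le (hA_le t ht) (hA'_le t ht)
        (hA''_le t ht) (hΦ_le t ht))
  have h₁ := norm_le_expTail_succ_of_norm_deriv_le hM0 1
    (fun t ht => (hAΦ t ht).sub (hlin t).hasDerivWithinAt) (by simp [hΦa]) h₂
  exact norm_le_expTail_succ_of_norm_deriv_le hM0 2
    (fun t ht => (hΦ t ht).sub (hquad t).hasDerivWithinAt) (by simp [hΦa]) h₁

end LinearODE

theorem transition_matrix_taylor2_bound_general {E : Type*} [NormedAddCommGroup E]
    [NormedSpace ℝ E]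
    (t₀ tf MA MdA MddA : ℝ) (A A' A'' : ℝ → E →L[ℝ] E) (φ : ℝ → ℝ → E →L[ℝ] E)
    (hA' : ∀ t ∈ Set.Icc t₀ tf, HasDerivWithinAt A (A' t) (Set.Icc t₀ tf) t)
    (hA'' : ∀ t ∈ Set.Icc t₀ tf, HasDerivWithinAt A' (A'' t) (Set.Icc t₀ tf) t)
    (hMA : 0 < MA)
    (hA_bound : ∀ t ∈ Set.Icc t₀ tf, ‖A t‖ ≤ MA)
    (hA'_bound : ∀ t ∈ Set.Icc t₀ tf, ‖A' t‖ ≤ MdA)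
    (hA''_bound : ∀ t ∈ Set.Icc t₀ tf, ‖A'' t‖ ≤ MddA)
    (hode : ∀ s ∈ Set.Icc t₀ tf, ∀ t ∈ Set.Icc t₀ tf,
      HasDerivWithinAt (fun τ => φ τ s) ((A t).comp (φ t s)) (Set.Icc t₀ tf) t)
    (hinit : ∀ s ∈ Set.Icc t₀ tf, φ s s = ContinuousLinearMap.id ℝ E) :
    ∀ s t : ℝ, t₀ ≤ s → s ≤ t → t ≤ tf →
      ‖φ t s - (ContinuousLinearMap.id ℝ E + (t - s) • A s
          + ((t - s) ^ 2 / 2) • (A' s + (A s).comp (A s)))‖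
        ≤ (1 + 3 * MdA / MA ^ 2 + MddA / MA ^ 3) *
            (Real.exp ((t - s) * MA) - (t - s) ^ 2 * MA ^ 2 / 2 - (t - s) * MA - 1) := by
  intro s t hs hst htf
  have hsub : Icc s tf ⊆ Icc t₀ tf := Icc_subset_Icc_left hs
  have hsI : s ∈ Icc t₀ tf := ⟨hs, hst.trans htf⟩
  have key := norm_sub_taylor2_le_of_linearODE
    (fun t ht => (hA' t (hsub ht)).mono hsub) (fun t ht => (hA'' t (hsub ht)).mono hsub) hMA
    (fun t ht => hA_bound t (hsub ht)) (fun t ht => hA'_bound t (hsub ht))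
    (fun t ht => hA''_bound t (hsub ht)) (fun t ht => (hode s hsI t (hsub ht)).mono hsub)
    (hinit s hsI) t ⟨hst, htf⟩
  convert key using 1
  rw [expTail_three]
  field_simp
  ring

theorem transition_matrix_taylor2_bound {E : Type*} [NormedAddCommGroup E]
    [NormedSpace ℝ E]
    (t₀ tf MA MdA MddA : ℝ) (A A' A'' : ℝ → E →L[ℝ] E) (φ : ℝ → ℝ → E →L[ℝ] E)
    (hA' : ∀ t ∈ Set.Icc t₀ tf, HasDerivWithinAt A (A' t) (Set.Icc t₀ tf) t)
    (hA'' : ∀ t ∈ Set.Icc t₀ tf, HasDerivWithinAt A' (A'' t) (Set.Icc t₀ tf) t)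
    (hA''c : ContinuousOn A'' (Set.Icc t₀ tf))
    (hMA : 0 < MA)
    (hA_bound : ∀ t ∈ Set.Icc t₀ tf, ‖A t‖ ≤ MA)
    (hA'_bound : ∀ t ∈ Set.Icc t₀ tf, ‖A' t‖ ≤ MdA)
    (hA''_bound : ∀ t ∈ Set.Icc t₀ tf, ‖A'' t‖ ≤ MddA)
    (hode : ∀ s ∈ Set.Icc t₀ tf, ∀ t ∈ Set.Icc t₀ tf,
      HasDerivWithinAt (fun τ => φ τ s) ((A t).comp (φ t s)) (Set.Icc t₀ tf) t)
    (hinit : ∀ s ∈ Set.Icc t₀ tf, φ s s = ContinuousLinearMap.id ℝ E) :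
    ∀ s t : ℝ, t₀ ≤ s → s ≤ t → t ≤ tf →
      ‖φ t s - (ContinuousLinearMap.id ℝ E + (t - s) • A s
          + ((t - s) ^ 2 / 2) • (A' s + (A s).comp (A s)))‖
        ≤ (1 + 3 * MdA / MA ^ 2 + MddA / MA ^ 3) *
            (Real.exp ((t - s) * MA) - (t - s) ^ 2 * MA ^ 2 / 2 - (t - s) * MA - 1) :=
  transition_matrix_taylor2_bound_general t₀ tf MA MdA MddA A A' A'' φ hA' hA'' hMA hA_bound
    hA'_bound hA''_bound hode hinit
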